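/- Local maximizers transfer to the approximation: if x̄ is a local maximizer of the A-HSCOP (maximize θ over X), and ε̄ > 0 is such that for all ε ∈ (0, ε̄] and all x in some neighborhood of x̄, ψ_{ij}⁻ 𝟙_{(−ε,∞)}(φ_{ij}(x)) = ψ_{ij}⁻ 𝟙_{[0,∞)}(φ_{ij}(x)) for all pairs (i,j) with j outside the zero-level negative index set of x̄, then x̄ is a local maximizer of the ε-approximated problem (maximize θ^ε over X^ε) for every ε ∈ (0, ε̄]. -/
import Mathlib


open Filter Topology

/-- Open Heaviside: indicator of `(a, ∞)`. -/
noncomputable def openHeaviside (a t : ℝ) : ℝ := if a < t then 1 else 0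

/-- Closed Heaviside: indicator of `[0, ∞)`. -/
noncomputable def closedHeaviside (t : ℝ) : ℝ := if 0 ≤ t then 1 else 0

/-- A-HSCOP objective. -/
noncomputable def thetaAHS {n J0 : ℕ} (c : (Fin n → ℝ) → ℝ) (ψ0 : Fin J0 → ℝ)
    (φ0 : Fin J0 → (Fin n → ℝ) → ℝ) (x : Fin n → ℝ) : ℝ :=
  c x + ∑ j, ψ0 j * closedHeaviside (φ0 j x)

/-- ε-approximated objective. -/
noncomputable def thetaAHSEps {n J0 : ℕ} (c : (Fin n → ℝ) → ℝ) (ψ0 : Fin J0 → ℝ)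
    (φ0 : Fin J0 → (Fin n → ℝ) → ℝ) (ε : ℝ) (x : Fin n → ℝ) : ℝ :=
  c x + ∑ j, max (ψ0 j) 0 * closedHeaviside (φ0 j x)
      - ∑ j, max (-ψ0 j) 0 * openHeaviside (-ε) (φ0 j x)

/-- Feasible set of the A-HSCOP. -/
def Xahs {n I : ℕ} (P : Set (Fin n → ℝ)) (A : Fin I → Fin n → ℝ) (η : Fin I → ℝ)
    (J : Fin I → ℕ) (ψ : (i : Fin I) → Fin (J i) → ℝ)
    (φ : (i : Fin I) → Fin (J i) → (Fin n → ℝ) → ℝ) : Set (Fin n → ℝ) :=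
  {x ∈ P | ∀ i : Fin I,
    (∑ k, A i k * x k) + ∑ j, ψ i j * closedHeaviside (φ i j x) ≥ η i}

/-- The ε-approximated feasible set. -/
noncomputable def XahsEps {n I : ℕ} (P : Set (Fin n → ℝ)) (A : Fin I → Fin n → ℝ)
    (η : Fin I → ℝ) (J : Fin I → ℕ) (ψ : (i : Fin I) → Fin (J i) → ℝ)
    (φ : (i : Fin I) → Fin (J i) → (Fin n → ℝ) → ℝ) (ε : ℝ) : Set (Fin n → ℝ) :=
  {x ∈ P | ∀ i : Fin I,
    (∑ k, A i k * x k)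
      + ∑ j, max (ψ i j) 0 * closedHeaviside (φ i j x)
      - ∑ j, max (-ψ i j) 0 * openHeaviside (-ε) (φ i j x) ≥ η i}

section
variable {n I J0 : ℕ}

lemma cH_le_oH {ε t : ℝ} (hε : 0 < ε) : closedHeaviside t ≤ openHeaviside (-ε) t := by
  unfold closedHeaviside openHeaviside
  split_ifs with h1 h2 <;> try norm_num
  exact absurd (by linarith) h2

lemma max_sub_max (a : ℝ) : max a 0 - max (-a) 0 = a := by
  rcases le_total a 0 with h | h
  · simp [max_eq_right h, max_eq_left (neg_nonneg.2 h)]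
  · simp [max_eq_left h, max_eq_right (neg_nonpos.2 h)]

lemma sum_split {m : ℕ} (ψ : Fin m → ℝ) (t : Fin m → ℝ) :
    ∑ j, ψ j * closedHeaviside (t j)
      = ∑ j, max (ψ j) 0 * closedHeaviside (t j)
        - ∑ j, max (-ψ j) 0 * closedHeaviside (t j) := by
  rw [← Finset.sum_sub_distrib]
  apply Finset.sum_congr rfl
  intro j _
  rw [← sub_mul, max_sub_max]

lemma sum_oH_ge {m : ℕ} {ε : ℝ} (hε : 0 < ε) (ψ : Fin m → ℝ) (t : Fin m → ℝ) :
    ∑ j, max (-ψ j) 0 * closedHeaviside (t j)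
      ≤ ∑ j, max (-ψ j) 0 * openHeaviside (-ε) (t j) := by
  apply Finset.sum_le_sum
  intro j _
  exact mul_le_mul_of_nonneg_left (cH_le_oH hε) (le_max_right _ _)

lemma theta_eps_le (c : (Fin n → ℝ) → ℝ) (ψ0 : Fin J0 → ℝ)
    (φ0 : Fin J0 → (Fin n → ℝ) → ℝ) {ε : ℝ} (hε : 0 < ε) (x : Fin n → ℝ) :
    thetaAHSEps c ψ0 φ0 ε x ≤ thetaAHS c ψ0 φ0 x := by
  unfold thetaAHS thetaAHSEps
  rw [sum_split ψ0 (fun j => φ0 j x)]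
  have := sum_oH_ge hε ψ0 (fun j => φ0 j x)
  linarith

lemma XahsEps_subset (P : Set (Fin n → ℝ)) (A : Fin I → Fin n → ℝ) (η : Fin I → ℝ)
    (J : Fin I → ℕ) (ψ : (i : Fin I) → Fin (J i) → ℝ)
    (φ : (i : Fin I) → Fin (J i) → (Fin n → ℝ) → ℝ) {ε : ℝ} (hε : 0 < ε) :
    XahsEps P A η J ψ φ ε ⊆ Xahs P A η J ψ φ := by
  rintro x ⟨hxP, hx⟩
  refine ⟨hxP, fun i => ?_⟩
  have h := hx i
  rw [sum_split (ψ i) (fun j => φ i j x)]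
  have := sum_oH_ge hε (ψ i) (fun j => φ i j x)
  linarith

end
theorem local_max_transfers_to_approximation {n I J0 : ℕ} (P : Set (Fin n → ℝ))
    (c : (Fin n → ℝ) → ℝ)
    (ψ0 : Fin J0 → ℝ) (φ0 : Fin J0 → (Fin n → ℝ) → ℝ)
    (A : Fin I → Fin n → ℝ) (η : Fin I → ℝ) (J : Fin I → ℕ)
    (ψ : (i : Fin I) → Fin (J i) → ℝ)
    (φ : (i : Fin I) → Fin (J i) → (Fin n → ℝ) → ℝ)
    (xbar : Fin n → ℝ) (hfeas : xbar ∈ Xahs P A η J ψ φ)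
    (hloc : IsLocalMaxOn (thetaAHS c ψ0 φ0) (Xahs P A η J ψ φ) xbar)
    (εbar : ℝ) (hεbar : 0 < εbar)
    -- local sign agreement off the zero-level negative index sets of x̄
    (hsign : ∃ N ∈ nhds xbar, ∀ ε : ℝ, 0 < ε → ε ≤ εbar → ∀ x ∈ N,
      (∀ j : Fin J0, ¬(ψ0 j < 0 ∧ φ0 j xbar = 0) →
        max (-ψ0 j) 0 * openHeaviside (-ε) (φ0 j x)
          = max (-ψ0 j) 0 * closedHeaviside (φ0 j x)) ∧
      (∀ (i : Fin I) (j : Fin (J i)), ¬(ψ i j < 0 ∧ φ i j xbar = 0) →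
        max (-ψ i j) 0 * openHeaviside (-ε) (φ i j x)
          = max (-ψ i j) 0 * closedHeaviside (φ i j x))) :
    ∀ ε : ℝ, 0 < ε → ε ≤ εbar →
      IsLocalMaxOn (thetaAHSEps c ψ0 φ0 ε) (XahsEps P A η J ψ φ ε) xbar := by
  intro ε hε hεε
  obtain ⟨N, hN, hNs⟩ := hsign
  -- equality of objectives at xbar
  have hbar : thetaAHSEps c ψ0 φ0 ε xbar = thetaAHS c ψ0 φ0 xbar := by
    have h1 := (hNs ε hε hεε xbar (mem_of_mem_nhds hN)).1
    unfold thetaAHS thetaAHSEps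
    rw [sum_split ψ0 (fun j => φ0 j xbar)]
    have : ∑ j, max (-ψ0 j) 0 * openHeaviside (-ε) (φ0 j xbar)
        = ∑ j, max (-ψ0 j) 0 * closedHeaviside (φ0 j xbar) := by
      apply Finset.sum_congr rfl
      intro j _
      by_cases hj : ψ0 j < 0 ∧ φ0 j xbar = 0
      · rw [hj.2]
        unfold openHeaviside closedHeaviside
        rw [if_pos (by linarith), if_pos le_rfl]
      · exact h1 j hj
    rw [this]
    ring
  -- main
  rw [IsLocalMaxOn, IsMaxFilter] at hloc ⊢
  have hsub := XahsEps_subset P A η J ψ φ hε (n := n) (I := I)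
  have hmem : {x | thetaAHS c ψ0 φ0 x ≤ thetaAHS c ψ0 φ0 xbar} ∈ 𝓝[Xahs P A η J ψ φ] xbar := hloc
  obtain ⟨U, hUo, hxbarU, hUs⟩ := mem_nhdsWithin.1 hmem
  apply mem_nhdsWithin.2
  refine ⟨U, hUo, hxbarU, ?_⟩
  rintro x ⟨hxU, hxE⟩
  have hxX : x ∈ Xahs P A η J ψ φ := hsub hxE
  have hθ : thetaAHS c ψ0 φ0 x ≤ thetaAHS c ψ0 φ0 xbar := hUs ⟨hxU, hxX⟩
  calc thetaAHSEps c ψ0 φ0 ε x ≤ thetaAHS c ψ0 φ0 x := theta_eps_le c ψ0 φ0 hε x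
    _ ≤ thetaAHS c ψ0 φ0 xbar := hθ
    _ = thetaAHSEps c ψ0 φ0 ε xbar := hbar.symm
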